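/- For n ≥ 2, the automorphism group of the Hasse diagram of ∂Δⁿ has order 2·(n+1)!, i.e., |Aut(H(∂Δⁿ))| = 2·|Aut(∂Δⁿ)|. -/

import Mathlib

/-!
Two simplices of `∂Δⁿ` are adjacent in the Hasse diagram iff their symmetric difference is a
singleton, so the diagram is the hypercube on the subsets of the `n + 1` vertices with `∅` and
the full set removed. Vertex permutations and complementation preserve this relation, giving
`2 · (n + 1)!` automorphisms.

Conversely, in the hypercube two distinct vertices with a common neighbour have exactly two of them
(the corners of a square), and only `∅` or the full set can be missing; so two vertices of the
diagram with a unique common neighbour are both singletons or both co-singletons. Distinct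
singletons do have a unique common neighbour, hence an automorphism maps all singletons to
singletons or all to co-singletons; after composing with complementation it agrees on singletons
with the automorphism induced by a vertex permutation. An automorphism fixing the singletons fixes
every simplex, by induction on the dimension: the image of `σ` is adjacent to all facets of `σ`,
which it fixes, and `σ` is the only simplex of its size above all of them.
-/

open Finset

/-- An abstract simplicial complex on vertex type `V`. -/
structure SComplex (V : Type) [DecidableEq V] where
  faces : Set (Finset V)
  nonempty_of_mem : ∀ {s : Finset V}, s ∈ faces → s.Nonempty
  down_closed : ∀ {s t : Finset V}, s ∈ faces → t ⊆ s → t.Nonempty → t ∈ faces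

variable {V : Type} [DecidableEq V]

/-- A primitive vector: a codimension-1 face pair of simplices of `K`. -/
def IsPrimitive (K : SComplex V) (p : Finset V × Finset V) : Prop :=
  p.1 ∈ K.faces ∧ p.2 ∈ K.faces ∧ p.1 ⊆ p.2 ∧ p.2.card = p.1.card + 1

/-- A discrete vector field on `K`. -/
def IsDVF (K : SComplex V) (W : Set (Finset V × Finset V)) : Prop :=
  (∀ p ∈ W, IsPrimitive K p) ∧
    ∀ p ∈ W, ∀ q ∈ W, p ≠ q →
      p.1 ≠ q.1 ∧ p.1 ≠ q.2 ∧ p.2 ≠ q.1 ∧ p.2 ≠ q.2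

/-- `W` admits a nontrivial closed `V`-path. -/
def HasClosedPath (W : Set (Finset V × Finset V)) : Prop :=
  ∃ (k : ℕ) (α β : ℕ → Finset V), 1 ≤ k ∧
    (∀ i < k, (α i, β i) ∈ W) ∧
    (∀ i < k, α (i + 1) ⊆ β i ∧ (β i).card = (α (i + 1)).card + 1 ∧ α (i + 1) ≠ α i) ∧
    α k = α 0

/-- A gradient vector field on `K`. -/
def IsGVF (K : SComplex V) (W : Set (Finset V × Finset V)) : Prop :=
  IsDVF K W ∧ ¬ HasClosedPath W

theorem IsGVF.mono {K : SComplex V} {W W' : Set (Finset V × Finset V)}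
    (h : IsGVF K W) (hsub : W' ⊆ W) : IsGVF K W' := by
  obtain ⟨⟨h1, h2⟩, h3⟩ := h
  refine ⟨⟨fun p hp => h1 p (hsub hp), fun p hp q hq hpq => h2 p (hsub hp) q (hsub hq) hpq⟩, ?_⟩
  rintro ⟨k, α, β, hk, hW, hrest, hclosed⟩
  exact h3 ⟨k, α, β, hk, fun i hi => hsub (hW i hi), hrest, hclosed⟩

/-- The vertices of the Morse complex of `K`: primitive vectors. -/
def MVert (K : SComplex V) : Type := {p : Finset V × Finset V // IsPrimitive K p}

instance (K : SComplex V) : DecidableEq (MVert K) :=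
  Subtype.instDecidableEq

/-- The Morse complex of `K`: simplices are gradient vector fields. -/
def morse (K : SComplex V) : SComplex (MVert K) where
  faces := {s : Finset (MVert K) | s.Nonempty ∧
    IsGVF K {p | ∃ x ∈ s, (x : {p : Finset V × Finset V // IsPrimitive K p}).val = p}}
  nonempty_of_mem := fun h => h.1
  down_closed := by
    rintro s t ⟨-, hgvf⟩ hts htne
    exact ⟨htne, hgvf.mono (by rintro p ⟨x, hx, rfl⟩; exact ⟨x, hts hx, rfl⟩)⟩

/-- The image of a primitive vector under a vertex map. -/
def indVert (e : V → V) (p : Finset V × Finset V) : Finset V × Finset V :=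
  (p.1.image e, p.2.image e)

/-- The automorphism group of a simplicial complex, as a subgroup of the
permutations of its vertex set. -/
def autK (K : SComplex V) : Subgroup (Equiv.Perm V) where
  carrier := {e | ∀ s : Finset V, s ∈ K.faces ↔ s.image e ∈ K.faces}
  one_mem' := by intro s; simp
  mul_mem' := by
    intro a b ha hb s
    rw [hb s]
    have : (s.image b).image a = s.image (a * b) := by
      rw [Finset.image_image]; rfl
    rw [ha (s.image b), this]
  inv_mem' := by
    intro a ha s
    have := ha (s.image ⇑(a⁻¹))
    have h2 : (s.image ⇑(a⁻¹)).image ⇑a = s := by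
      rw [Finset.image_image]
      simp [Function.comp_def]
    rw [h2] at this
    exact this.symm

/-- The Hasse diagram of `K`, as a simple graph on the simplices of `K`. -/
def hasse (K : SComplex V) : SimpleGraph {s : Finset V // s ∈ K.faces} where
  Adj σ τ := (σ.1 ⊆ τ.1 ∧ τ.1.card = σ.1.card + 1) ∨ (τ.1 ⊆ σ.1 ∧ σ.1.card = τ.1.card + 1)
  symm := by tauto
  loopless := ⟨fun σ h => by rcases h with ⟨-, h⟩ | ⟨-, h⟩ <;> omega⟩

/-- The automorphism group of a simple graph, as a subgroup of the permutations
of its vertex set. -/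
def autG {α : Type} (G : SimpleGraph α) : Subgroup (Equiv.Perm α) where
  carrier := {e | ∀ u v, G.Adj (e u) (e v) ↔ G.Adj u v}
  one_mem' := by intro u v; simp
  mul_mem' := by
    intro a b ha hb u v
    rw [show ((a * b : Equiv.Perm α) u) = a (b u) from rfl,
      show ((a * b : Equiv.Perm α) v) = a (b v) from rfl, ha, hb]
  inv_mem' := by
    intro a ha u v
    have := ha (a⁻¹ u) (a⁻¹ v)
    simpa using this.symm

/-- The boundary of the `n`-simplex: all nonempty proper subsets of the
`(n+1)`-element vertex set. -/
def bdSimplex (n : ℕ) : SComplex (Fin (n + 1)) where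
  faces := {s | s.Nonempty ∧ s ≠ Finset.univ}
  nonempty_of_mem := fun h => h.1
  down_closed := by
    rintro s t ⟨-, hs⟩ hts htne
    refine ⟨htne, fun h => hs ?_⟩
    subst h
    exact Finset.univ_subset_iff.mp hts

instance (n : ℕ) : DecidablePred (· ∈ (bdSimplex n).faces) :=
  fun s => inferInstanceAs (Decidable (s.Nonempty ∧ s ≠ Finset.univ))

/-- The vertices of the Hasse diagram of `∂Δⁿ`: the simplices of `∂Δⁿ`. -/
abbrev BdVert (n : ℕ) : Type := {s : Finset (Fin (n + 1)) // s ∈ (bdSimplex n).faces}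

instance (n : ℕ) : Fintype (BdVert n) := Subtype.fintype _

instance instHasseAdjDecidable (K : SComplex V) : DecidableRel (hasse K).Adj :=
  fun a b => inferInstanceAs
    (Decidable ((a.1 ⊆ b.1 ∧ b.1.card = a.1.card + 1) ∨ (b.1 ⊆ a.1 ∧ a.1.card = b.1.card + 1)))

open scoped symmDiff

theorem Finset.card_symmDiff_eq_one_iff {s t : Finset V} :
    #(s ∆ t) = 1 ↔ (s ⊆ t ∧ #t = #s + 1) ∨ (t ⊆ s ∧ #s = #t + 1) := by
  rw [symmDiff_def, sup_eq_union, card_union_of_disjoint disjoint_sdiff_sdiff]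
  constructor
  · intro h
    rcases Nat.eq_zero_or_pos #(s \ t) with hst | hst
    · have hsub : s ⊆ t := sdiff_eq_empty_iff_subset.mp (card_eq_zero.mp hst)
      have := card_sdiff_add_card_eq_card hsub
      exact Or.inl ⟨hsub, by omega⟩
    · have hsub : t ⊆ s := sdiff_eq_empty_iff_subset.mp (card_eq_zero.mp (by omega))
      have := card_sdiff_add_card_eq_card hsub
      exact Or.inr ⟨hsub, by omega⟩
  · rintro (⟨hsub, hcard⟩ | ⟨hsub, hcard⟩)
    · rw [sdiff_eq_empty_iff_subset.mpr hsub, card_empty, card_sdiff_of_subset hsub]; omega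
    · rw [sdiff_eq_empty_iff_subset.mpr hsub, card_empty, card_sdiff_of_subset hsub]; omega

theorem hasse_adj_iff {K : SComplex V} {σ τ : {s // s ∈ K.faces}} :
    (hasse K).Adj σ τ ↔ #(σ.1 ∆ τ.1) = 1 :=
  Finset.card_symmDiff_eq_one_iff.symm

theorem mem_autK_iff {K : SComplex V} {e : Equiv.Perm V} :
    e ∈ autK K ↔ ∀ s, s ∈ K.faces ↔ s.image e ∈ K.faces :=
  Iff.rfl

theorem mem_autG_iff {α : Type} {G : SimpleGraph α} {g : Equiv.Perm α} :
    g ∈ autG G ↔ ∀ u v, G.Adj (g u) (g v) ↔ G.Adj u v :=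
  Iff.rfl

def hasseAut (K : SComplex V) (e : autK K) : autG (hasse K) :=
  ⟨e.1.finsetCongr.subtypeEquiv fun s => by
      rw [Equiv.finsetCongr_apply, map_eq_image]; exact mem_autK_iff.mp e.2 s,
    fun σ τ => by
      simp only [hasse_adj_iff, Equiv.subtypeEquiv_apply, Equiv.finsetCongr_apply, map_eq_image,
        Equiv.coe_toEmbedding, ← image_symmDiff _ _ e.1.injective,
        card_image_of_injective _ e.1.injective]⟩

theorem hasseAut_apply_coe (K : SComplex V) (e : autK K) (σ : {s // s ∈ K.faces}) :
    ((hasseAut K e : Equiv.Perm _) σ).1 = σ.1.image e := by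
  simp [hasseAut, map_eq_image]

theorem eq_one_of_forall_card_eq_one {K : SComplex V} {h : autG (hasse K)}
    (hfix : ∀ σ, #σ.1 = 1 → (h : Equiv.Perm {s // s ∈ K.faces}) σ = σ) : h = 1 := by
  refine Subtype.ext (Equiv.ext fun σ => ?_)
  rw [OneMemClass.coe_one, Equiv.Perm.one_apply]
  induction hk : #σ.1 using Nat.strong_induction_on generalizing σ with
  | _ k ih =>
  obtain hk1 | hk2 : k = 1 ∨ 2 ≤ k := by
    have := card_pos.mpr (K.nonempty_of_mem σ.2); omega
  · exact hfix σ (hk ▸ hk1)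
  set τ := (h : Equiv.Perm {s // s ∈ K.faces}) σ with hτ
  let facet (x : V) (hx : x ∈ σ.1) : {s // s ∈ K.faces} :=
    ⟨σ.1.erase x, K.down_closed σ.2 (erase_subset x σ.1)
      (card_pos.mp (by rw [card_erase_of_mem hx]; omega))⟩
  have hfacet_card (x : V) (hx : x ∈ σ.1) : #(facet x hx).1 + 1 = k :=
    hk ▸ card_erase_add_one hx
  have hfacet_adj (x : V) (hx : x ∈ σ.1) : (hasse K).Adj (facet x hx) τ := by
    rw [← ih _ (by have := hfacet_card x hx; omega) (facet x hx) rfl, hτ, mem_autG_iff.mp h.2]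
    exact Or.inl ⟨erase_subset x σ.1, (card_erase_add_one hx).symm⟩
  -- `τ` cannot lie below a facet: it would then be fixed by induction, hence equal to `σ`.
  have hτ_card : #τ.1 = k := by
    obtain ⟨x, hx⟩ := K.nonempty_of_mem σ.2
    rcases hfacet_adj x hx with ⟨-, hc⟩ | ⟨-, hc⟩
    · have := hfacet_card x hx; omega
    · have hτσ : τ = σ := h.1.injective (ih #τ.1 (by have := hfacet_card x hx; omega) τ rfl)
      have := hfacet_card x hx
      rw [hτσ, hk] at hc; omega
  have hsub : σ.1 ⊆ τ.1 := by
    intro z hz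
    obtain ⟨x, hx, hxz⟩ := exists_mem_ne (by omega : 1 < #σ.1) z
    rcases hfacet_adj x hx with ⟨hle, -⟩ | ⟨-, hc⟩
    · exact hle (mem_erase.mpr ⟨hxz.symm, hz⟩)
    · have := hfacet_card x hx; omega
  exact (Subtype.ext (eq_of_subset_of_card_le hsub (by omega))).symm

def SimpleGraph.HasUniqueCommonNeighbor {α : Type} (G : SimpleGraph α) (u w : α) : Prop :=
  u ≠ w ∧ ∃! v, G.Adj u v ∧ G.Adj w v

theorem SimpleGraph.HasUniqueCommonNeighbor.map {α : Type} {G : SimpleGraph α}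
    {g : Equiv.Perm α} (hg : g ∈ autG G) {u w : α} (h : G.HasUniqueCommonNeighbor u w) :
    G.HasUniqueCommonNeighbor (g u) (g w) :=
  ⟨g.injective.ne h.1, (g.existsUnique_congr fun v => by
    rw [mem_autG_iff.mp hg, mem_autG_iff.mp hg]).mp h.2⟩

section BoundarySimplex

variable {n : ℕ}

theorem mem_bdSimplex_faces_iff {s : Finset (Fin (n + 1))} :
    s ∈ (bdSimplex n).faces ↔ 1 ≤ #s ∧ #s ≤ n := by
  have := card_le_univ s
  rw [Fintype.card_fin] at this
  change s.Nonempty ∧ s ≠ univ ↔ _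
  rw [← card_pos, Ne, ← card_eq_iff_eq_univ, Fintype.card_fin]
  omega

theorem mem_autK_bdSimplex (e : Equiv.Perm (Fin (n + 1))) : e ∈ autK (bdSimplex n) :=
  mem_autK_iff.mpr fun s => by
    rw [mem_bdSimplex_faces_iff, mem_bdSimplex_faces_iff, card_image_of_injective _ e.injective]

theorem autK_bdSimplex : autK (bdSimplex n) = ⊤ :=
  eq_top_iff.mpr fun e _ => mem_autK_bdSimplex e

theorem card_autK_bdSimplex : Nat.card (autK (bdSimplex n)) = (n + 1).factorial := by
  rw [autK_bdSimplex, Subgroup.card_top, Nat.card_perm, Nat.card_fin]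

def BdVert.single (hn : 1 ≤ n) (i : Fin (n + 1)) : BdVert n :=
  ⟨{i}, mem_bdSimplex_faces_iff.mpr (by rw [card_singleton]; omega)⟩

@[simp]
theorem BdVert.coe_single (hn : 1 ≤ n) (i : Fin (n + 1)) : (BdVert.single hn i).1 = {i} :=
  rfl

def complAut (n : ℕ) : autG (hasse (bdSimplex n)) :=
  ⟨(compl_involutive.toPerm _).subtypeEquiv fun s => by
      change s.Nonempty ∧ s ≠ univ ↔ sᶜ.Nonempty ∧ sᶜ ≠ univ
      simp only [nonempty_iff_ne_empty, ne_eq, compl_eq_empty_iff, compl_eq_univ_iff]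
      tauto,
    fun σ τ => by
      simp only [hasse_adj_iff, Equiv.subtypeEquiv_apply, Function.Involutive.coe_toPerm,
        compl_symmDiff_compl]⟩

theorem card_complAut_apply (σ : BdVert n) :
    #((complAut n : Equiv.Perm (BdVert n)) σ).1 + #σ.1 = n + 1 := by
  have h := card_compl_add_card σ.1
  rw [Fintype.card_fin] at h
  exact h

theorem complAut_mul_self : complAut n * complAut n = 1 :=
  Subtype.ext (Equiv.ext fun σ => Subtype.ext (compl_compl σ.1))

theorem card_eq_of_hasUniqueCommonNeighbor {σ τ : BdVert n}
    (h : (hasse (bdSimplex n)).HasUniqueCommonNeighbor σ τ) :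
    (#σ.1 = 1 ∧ #τ.1 = 1) ∨ (#σ.1 = n ∧ #τ.1 = n) := by
  obtain ⟨hne, ν, ⟨hσν, hτν⟩, huniq⟩ := h
  rw [hasse_adj_iff] at hσν hτν
  -- `t` completes `σ, ν, τ` to a square of the hypercube; it is a second common neighbour
  -- unless it is `∅` or `univ`.
  set t := σ.1 ∆ τ.1 ∆ ν.1 with ht
  have hσt : σ.1 ∆ t = τ.1 ∆ ν.1 := by
    rw [ht, symmDiff_assoc, symmDiff_symmDiff_cancel_left]
  have hτt : τ.1 ∆ t = σ.1 ∆ ν.1 := by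
    rw [ht, symmDiff_comm σ.1, symmDiff_assoc, symmDiff_symmDiff_cancel_left]
  have ht_faces : t ∉ (bdSimplex n).faces := by
    intro ht_mem
    have htν : t = ν.1 := congrArg Subtype.val (huniq ⟨t, ht_mem⟩
      ⟨hasse_adj_iff.mpr (hσt ▸ hτν), hasse_adj_iff.mpr (hτt ▸ hσν)⟩)
    rw [ht, symmDiff_eq_right, symmDiff_eq_bot] at htν
    exact hne (Subtype.ext htν)
  obtain ht | ht : t = ∅ ∨ t = univ := by
    change ¬(t.Nonempty ∧ t ≠ univ) at ht_faces
    rw [← not_nonempty_iff_eq_empty]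
    tauto
  · rw [ht, ← bot_eq_empty, symmDiff_bot] at hσt hτt
    exact Or.inl ⟨hσt ▸ hτν, hτt ▸ hσν⟩
  · rw [ht, ← top_eq_univ, symmDiff_top, hnot_eq_compl] at hσt hτt
    have hcompl (s : Finset (Fin (n + 1))) (hs : #sᶜ = 1) : #s = n := by
      have := card_compl_add_card s
      rw [Fintype.card_fin] at this
      omega
    exact Or.inr ⟨hcompl _ (hσt ▸ hτν), hcompl _ (hτt ▸ hσν)⟩

theorem hasUniqueCommonNeighbor_single (hn : 2 ≤ n) {i j : Fin (n + 1)} (hij : i ≠ j) :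
    (hasse (bdSimplex n)).HasUniqueCommonNeighbor
      (BdVert.single (one_le_two.trans hn) i) (BdVert.single (one_le_two.trans hn) j) := by
  have hpair : #({i, j} : Finset (Fin (n + 1))) = 2 := card_pair hij
  have hup (k : Fin (n + 1)) (ν : BdVert n) :
      (hasse (bdSimplex n)).Adj (BdVert.single (one_le_two.trans hn) k) ν ↔
        k ∈ ν.1 ∧ #ν.1 = 2 := by
    have := mem_bdSimplex_faces_iff.mp ν.2
    change (_ ⊆ ν.1 ∧ _) ∨ (ν.1 ⊆ _ ∧ _) ↔ _
    rw [BdVert.coe_single, singleton_subset_iff, card_singleton]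
    constructor
    · rintro (⟨hk, hc⟩ | ⟨-, hc⟩)
      · exact ⟨hk, hc⟩
      · omega
    · exact fun h => Or.inl h
  refine ⟨fun h => hij (singleton_injective (congrArg Subtype.val h)),
    ⟨{i, j}, mem_bdSimplex_faces_iff.mpr (by omega)⟩, ?_, ?_⟩
  · exact ⟨(hup i _).mpr ⟨mem_insert_self i {j}, hpair⟩,
      (hup j _).mpr ⟨mem_insert_of_mem (mem_singleton_self j), hpair⟩⟩
  · rintro ν ⟨hiν, hjν⟩
    obtain ⟨hi, hcard⟩ := (hup i ν).mp hiν
    refine Subtype.ext (eq_of_subset_of_card_le ?_ (by rw [hcard, hpair])).symm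
    exact insert_subset hi (singleton_subset_iff.mpr ((hup j ν).mp hjν).1)

theorem exists_card_apply_single (hn : 2 ≤ n) (g : autG (hasse (bdSimplex n))) :
    ∃ k, (k = 1 ∨ k = n) ∧
      ∀ i, #((g : Equiv.Perm (BdVert n)) (BdVert.single (one_le_two.trans hn) i)).1 = k := by
  have hsame {i j : Fin (n + 1)} (hij : i ≠ j) :=
    card_eq_of_hasUniqueCommonNeighbor ((hasUniqueCommonNeighbor_single hn hij).map g.2)
  refine ⟨#((g : Equiv.Perm (BdVert n)) (BdVert.single (one_le_two.trans hn) 0)).1, ?_,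
    fun i => ?_⟩
  · have h0last := hsame (i := 0) (j := Fin.last n)
      (Fin.ne_of_val_ne (by rw [Fin.val_zero, Fin.val_last]; omega))
    omega
  · obtain rfl | hi := eq_or_ne i 0
    · rfl
    · have := hsame hi
      omega

theorem exists_hasseAut_eq (hn : 1 ≤ n) (g : autG (hasse (bdSimplex n)))
    (hg : ∀ i, #((g : Equiv.Perm (BdVert n)) (BdVert.single hn i)).1 = 1) :
    ∃ e, hasseAut (bdSimplex n) e = g := by
  choose f hf using fun i => card_eq_one.mp (hg i)
  have hf_inj : Function.Injective f := fun i j hij => by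
    have := g.1.injective (Subtype.ext ((hf i).trans (hij ▸ (hf j).symm)))
    exact singleton_injective (congrArg Subtype.val this)
  refine ⟨⟨Equiv.ofBijective f hf_inj.bijective_of_finite, mem_autK_bdSimplex _⟩, ?_⟩
  refine inv_mul_eq_one.mp (eq_one_of_forall_card_eq_one fun σ hσ => ?_)
  obtain ⟨i, hi⟩ := card_eq_one.mp hσ
  obtain rfl : σ = BdVert.single hn i := Subtype.ext hi
  rw [Subgroup.coe_mul, Subgroup.coe_inv, Equiv.Perm.mul_apply, Equiv.Perm.inv_eq_iff_eq]
  exact Subtype.ext (by simp [hasseAut_apply_coe, hf])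

def bdHasseAut (n : ℕ) (p : autK (bdSimplex n) × Bool) : autG (hasse (bdSimplex n)) :=
  (if p.2 then complAut n else 1) * hasseAut (bdSimplex n) p.1

theorem card_bdHasseAut_apply_single (hn : 1 ≤ n) (p : autK (bdSimplex n) × Bool)
    (i : Fin (n + 1)) :
    #((bdHasseAut n p : Equiv.Perm (BdVert n)) (BdVert.single hn i)).1 = if p.2 then n else 1 := by
  obtain ⟨e, b⟩ := p
  set σ := (hasseAut (bdSimplex n) e : Equiv.Perm (BdVert n)) (BdVert.single hn i)
  have hσ : #σ.1 = 1 := by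
    rw [hasseAut_apply_coe, BdVert.coe_single, image_singleton, card_singleton]
  cases b
  · exact hσ
  · have := card_complAut_apply σ
    change #((complAut n : Equiv.Perm (BdVert n)) σ).1 = n
    omega

theorem bdHasseAut_injective (hn : 2 ≤ n) : Function.Injective (bdHasseAut n) := by
  rintro ⟨e, b⟩ ⟨e', b'⟩ h
  have hn1 : 1 ≤ n := one_le_two.trans hn
  obtain rfl : b = b' := by
    have := card_bdHasseAut_apply_single hn1 (e, b) 0
    rw [h, card_bdHasseAut_apply_single] at this
    cases b <;> cases b' <;> simp only [Bool.false_eq_true, if_false, if_true] at this ⊢ <;> omega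
  have he : hasseAut (bdSimplex n) e = hasseAut (bdSimplex n) e' := mul_left_cancel h
  refine Prod.ext (Subtype.ext (Equiv.ext fun i => singleton_injective ?_)) rfl
  have := hasseAut_apply_coe (bdSimplex n) e (BdVert.single hn1 i)
  rw [he, hasseAut_apply_coe] at this
  simpa using this.symm

theorem bdHasseAut_surjective (hn : 2 ≤ n) : Function.Surjective (bdHasseAut n) := by
  intro g
  have hn1 : 1 ≤ n := one_le_two.trans hn
  obtain ⟨k, hk | hk, hg⟩ := exists_card_apply_single hn g
  · obtain ⟨e, rfl⟩ := exists_hasseAut_eq hn1 g (hk ▸ hg)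
    exact ⟨(e, false), by simp [bdHasseAut]⟩
  · obtain ⟨e, he⟩ := exists_hasseAut_eq hn1 (complAut n * g) fun i => by
      have := card_complAut_apply ((g : Equiv.Perm (BdVert n)) (BdVert.single hn1 i))
      rw [hg, hk] at this
      simp only [Subgroup.coe_mul, Equiv.Perm.mul_apply]
      omega
    refine ⟨(e, true), ?_⟩
    rw [bdHasseAut, if_pos rfl, he, ← mul_assoc, complAut_mul_self, one_mul]

theorem card_autG_hasse_bdSimplex (hn : 2 ≤ n) :
    Nat.card (autG (hasse (bdSimplex n))) = 2 * Nat.card (autK (bdSimplex n)) := by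
  rw [← Nat.card_eq_of_bijective _ ⟨bdHasseAut_injective hn, bdHasseAut_surjective hn⟩,
    Nat.card_prod, Nat.card_eq_fintype_card (α := Bool), Fintype.card_bool, mul_comm]

end BoundarySimplex

/-- for `n ≥ 2`, the automorphism group of the Hasse diagram of
`∂Δⁿ` has order `2 · (n+1)! = 2 · |Aut(∂Δⁿ)|`. -/
theorem card_aut_hasse_bd (n : ℕ) (hn : 2 ≤ n) :
    Nat.card (autG (hasse (bdSimplex n))) = 2 * Nat.factorial (n + 1) ∧
    Nat.card (autG (hasse (bdSimplex n))) = 2 * Nat.card (autK (bdSimplex n)) := by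
  rw [card_autG_hasse_bdSimplex hn, card_autK_bdSimplex]
  exact ⟨rfl, rfl⟩
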